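/- (Proposition 2.4, equivalence of the Schwinger and Feynman parametric representations, in the Cheng–Wu chart x_N = 1.) Assume N ≥ 2, let ν ∈ ℝ^N and d ∈ ℝ, and assume ω := (Σ_{i=1}^N ν_i) − L·d/2 > 0. Then ∫_{(0,∞)^N} (∏_{i=1}^N x_i^{ν_i−1}) · U(x)^{−d/2} · exp(−F(x)/U(x)) dx = Γ(ω) · ∫_{(0,∞)^{N−1}} (∏_{i=1}^{N−1} x_i^{ν_i−1}) · U(x_1,…,x_{N−1},1)^{ω−d/2} · F(x_1,…,x_{N−1},1)^{−ω} dx_1⋯dx_{N−1}, as an identity in [0,∞]. -/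

import Mathlib

/-!
Cheng–Wu substitution: writing `x = t • (y, 1)` with `t > 0` and `y` in the positive orthant of
dimension `N - 1` has Jacobian `t ^ (N - 1)`. By homogeneity the Schwinger integrand along the ray
through `(y, 1)` is `t ^ (ω - 1) * exp (-t * F / U)` times a function of `y`, and the `t`-integral
is the Gamma integral `Γ(ω) * (U / F) ^ ω`.
-/

open MeasureTheory Set Real

def posOrthant (k : ℕ) : Set (Fin k → ℝ) := {x | ∀ i, 0 < x i}

lemma isOpen_posOrthant (k : ℕ) : IsOpen (posOrthant k) := by
  simp only [posOrthant, ofPred_forall]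
  exact isOpen_iInter_of_finite fun i => isOpen_lt continuous_const (continuous_apply i)

lemma measurableSet_posOrthant (k : ℕ) : MeasurableSet (posOrthant k) :=
  (isOpen_posOrthant k).measurableSet

lemma smul_mem_posOrthant_iff {k : ℕ} {t : ℝ} (ht : 0 < t) {x : Fin k → ℝ} :
    t • x ∈ posOrthant k ↔ x ∈ posOrthant k :=
  forall_congr' fun _ => mul_pos_iff_of_pos_left ht

lemma snoc_mem_posOrthant_iff {n : ℕ} {y : Fin n → ℝ} {t : ℝ} :
    (Fin.snoc y t : Fin (n + 1) → ℝ) ∈ posOrthant (n + 1) ↔ y ∈ posOrthant n ∧ 0 < t := by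
  simp [posOrthant, Fin.forall_fin_succ']

lemma snoc_smul_self {n : ℕ} (t : ℝ) (y : Fin n → ℝ) :
    (Fin.snoc (t • y) t : Fin (n + 1) → ℝ) = t • Fin.snoc y 1 := by
  ext i
  refine Fin.lastCases ?_ (fun j => ?_) i <;> simp

lemma lintegral_posOrthant_comp_smul {k : ℕ} {t : ℝ} (ht : 0 < t) (f : (Fin k → ℝ) → ENNReal) :
    ∫⁻ x in posOrthant k, f x = ENNReal.ofReal (t ^ k) * ∫⁻ x in posOrthant k, f (t • x) := by
  have hemb : MeasurableEmbedding (fun x : Fin k → ℝ => t • x) :=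
    (MeasurableEquiv.smul₀ t ht.ne').measurableEmbedding
  have hpre : (fun x : Fin k → ℝ => t • x) ⁻¹' posOrthant k = posOrthant k :=
    ext fun _ => smul_mem_posOrthant_iff ht
  have hmap :
      ENNReal.ofReal (t ^ k) • Measure.map (fun x : Fin k → ℝ => t • x) volume = volume := by
    rw [Measure.map_addHaar_smul volume ht.ne', Module.finrank_fin_fun, smul_smul,
      abs_of_pos (by positivity), ← ENNReal.ofReal_mul (by positivity),
      mul_inv_cancel₀ (by positivity), ENNReal.ofReal_one, one_smul]
  conv_lhs => rw [← hmap]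
  rw [Measure.restrict_smul, lintegral_smul_measure, hemb.restrict_map, hemb.lintegral_map, hpre,
    smul_eq_mul]

lemma lintegral_posOrthant_succ {n : ℕ} {f : (Fin (n + 1) → ℝ) → ENNReal}
    (hf : AEMeasurable f (volume.restrict (posOrthant (n + 1)))) :
    ∫⁻ x in posOrthant (n + 1), f x = ∫⁻ t in Ioi 0, ∫⁻ y in posOrthant n, f (Fin.snoc y t) := by
  let e := MeasurableEquiv.piFinSuccAbove (fun _ : Fin (n + 1) => ℝ) (Fin.last n)
  have he : ⇑e.symm = fun p : ℝ × (Fin n → ℝ) => (Fin.snoc p.2 p.1 : Fin (n + 1) → ℝ) := by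
    ext p i
    simp [e, MeasurableEquiv.piFinSuccAbove, Fin.snocEquiv]
  have hpre : e.symm ⁻¹' posOrthant (n + 1) = Ioi 0 ×ˢ posOrthant n := by
    ext p
    simp [he, snoc_mem_posOrthant_iff, and_comm]
  have hmp := (volume_preserving_piFinSuccAbove (fun _ : Fin (n + 1) => ℝ) (Fin.last n)).symm e
  have hmeas : AEMeasurable (f ∘ e.symm) (volume.restrict (Ioi 0 ×ˢ posOrthant n)) := by
    rw [← hpre]
    exact hf.comp_quasiMeasurePreserving
      (hmp.restrict_preimage_emb e.symm.measurableEmbedding _).quasiMeasurePreserving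
  rw [← hmp.setLIntegral_comp_preimage_emb e.symm.measurableEmbedding, hpre,
    Measure.volume_eq_prod, ← Measure.prod_restrict, lintegral_prod _ (by
      rwa [Measure.prod_restrict, ← Measure.volume_eq_prod])]
  simp [he]

lemma lintegral_posOrthant_succ_eq_lintegral_ray {n : ℕ} {f : (Fin (n + 1) → ℝ) → ENNReal}
    (hf : ContinuousOn f (posOrthant (n + 1))) :
    ∫⁻ x in posOrthant (n + 1), f x =
      ∫⁻ y in posOrthant n, ∫⁻ t in Ioi 0, ENNReal.ofReal (t ^ n) * f (t • Fin.snoc y 1) := by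
  have hray : ContinuousOn (fun p : ℝ × (Fin n → ℝ) => f (p.1 • Fin.snoc p.2 1))
      (Ioi 0 ×ˢ posOrthant n) :=
    hf.comp (by fun_prop) fun p ⟨ht, hy⟩ =>
      (smul_mem_posOrthant_iff ht).2 (snoc_mem_posOrthant_iff.2 ⟨hy, one_pos⟩)
  have hjac : Measurable fun p : ℝ × (Fin n → ℝ) => ENNReal.ofReal (p.1 ^ n) := by fun_prop
  have hmeas :
      AEMeasurable (Function.uncurry fun t y => ENNReal.ofReal (t ^ n) * f (t • Fin.snoc y 1))
        ((volume.restrict (Ioi 0)).prod (volume.restrict (posOrthant n))) := by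
    rw [Measure.prod_restrict]
    exact hjac.aemeasurable.mul
      (hray.aemeasurable (measurableSet_Ioi.prod (measurableSet_posOrthant n)))
  rw [lintegral_posOrthant_succ (hf.aemeasurable (measurableSet_posOrthant _)),
    ← lintegral_lintegral_swap hmeas]
  refine setLIntegral_congr_fun measurableSet_Ioi fun t ht => ?_
  rw [lintegral_posOrthant_comp_smul ht, ← lintegral_const_mul' _ _ ENNReal.ofReal_ne_top]
  simp_rw [snoc_smul_self]

lemma lintegral_rpow_mul_exp_neg_mul_Ioi {s r : ℝ} (hs : 0 < s) (hr : 0 < r) :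
    ∫⁻ t in Ioi 0, ENNReal.ofReal (t ^ (s - 1) * exp (-(r * t))) =
      ENNReal.ofReal ((1 / r) ^ s * Gamma s) := by
  have hint : IntegrableOn (fun t : ℝ => t ^ (s - 1) * exp (-(r * t))) (Ioi 0) := by
    simpa [rpow_one, neg_mul] using
      integrableOn_rpow_mul_exp_neg_mul_rpow (by linarith) zero_lt_one hr
  rw [← integral_rpow_mul_exp_neg_mul_Ioi hs hr, ofReal_integral_eq_lintegral_ofReal hint]
  filter_upwards [self_mem_ae_restrict measurableSet_Ioi] with t (ht : 0 < t)
  positivity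

lemma prod_smul_rpow {ι : Type*} [Fintype ι] {t : ℝ} (ht : 0 < t) {x : ι → ℝ}
    (hx : ∀ i, 0 ≤ x i) (a : ι → ℝ) :
    ∏ i, (t • x) i ^ a i = t ^ (∑ i, a i) * ∏ i, x i ^ a i := by
  simp_rw [Pi.smul_apply, smul_eq_mul, mul_rpow ht.le (hx _), Finset.prod_mul_distrib,
    rpow_sum_of_pos ht]

noncomputable def schwingerIntegrand {N : ℕ} (U F : (Fin N → ℝ) → ℝ) (ν : Fin N → ℝ) (d : ℝ)
    (x : Fin N → ℝ) : ℝ :=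
  (∏ i, x i ^ (ν i - 1)) * U x ^ (-(d / 2)) * exp (-(F x / U x))

lemma continuousOn_schwingerIntegrand {N : ℕ} {U F : (Fin N → ℝ) → ℝ}
    (hU : ContinuousOn U (posOrthant N)) (hF : ContinuousOn F (posOrthant N))
    (hUpos : ∀ x ∈ posOrthant N, 0 < U x) (ν : Fin N → ℝ) (d : ℝ) :
    ContinuousOn (schwingerIntegrand U F ν d) (posOrthant N) := by
  have hprod : ContinuousOn (fun x : Fin N → ℝ => ∏ i, x i ^ (ν i - 1)) (posOrthant N) :=
    continuousOn_finsetProd _ fun i _ =>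
      (continuous_apply i).continuousOn.rpow_const fun x hx => Or.inl (hx i).ne'
  exact (hprod.mul (hU.rpow_const fun x hx => Or.inl (hUpos x hx).ne')).mul
    (continuous_exp.comp_continuousOn (hF.div hU fun x hx => (hUpos x hx).ne').neg)

lemma schwingerIntegrand_smul {n L : ℕ} {U F : (Fin (n + 1) → ℝ) → ℝ} (ν : Fin (n + 1) → ℝ)
    (d : ℝ) {t : ℝ} (ht : 0 < t) {x : Fin (n + 1) → ℝ} (hx : x ∈ posOrthant (n + 1))
    (hUx : 0 < U x) (hU : U (t • x) = t ^ L * U x) (hF : F (t • x) = t ^ (L + 1) * F x) :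
    t ^ n * schwingerIntegrand U F ν d (t • x) =
      (∏ i, x i ^ (ν i - 1)) * U x ^ (-(d / 2)) *
        (t ^ ((∑ i, ν i) - L * d / 2 - 1) * exp (-(F x / U x * t))) := by
  have hexp : t ^ (L + 1) * F x / (t ^ L * U x) = F x / U x * t := by
    field_simp
    ring
  have hpow : t ^ n * (t ^ (∑ i, (ν i - 1)) * t ^ ((L : ℝ) * -(d / 2))) =
      t ^ ((∑ i, ν i) - L * d / 2 - 1) := by
    rw [← rpow_natCast, ← rpow_add ht, ← rpow_add ht, Finset.sum_sub_distrib]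
    congr 1
    simp only [Finset.sum_const, Finset.card_univ, Fintype.card_fin, nsmul_eq_mul]
    push_cast
    ring
  rw [schwingerIntegrand, hU, hF, hexp, prod_smul_rpow ht (fun i => (hx i).le),
    mul_rpow (by positivity) hUx.le, ← rpow_natCast_mul ht.le, ← hpow]
  ring

lemma lintegral_ray_schwingerIntegrand {n L : ℕ} {U F : (Fin (n + 1) → ℝ) → ℝ}
    {ν : Fin (n + 1) → ℝ} {d : ℝ} (hω : 0 < (∑ i, ν i) - L * d / 2) {x : Fin (n + 1) → ℝ}
    (hx : x ∈ posOrthant (n + 1)) (hUx : 0 < U x) (hFx : 0 < F x)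
    (hU : ∀ t : ℝ, 0 < t → U (t • x) = t ^ L * U x)
    (hF : ∀ t : ℝ, 0 < t → F (t • x) = t ^ (L + 1) * F x) :
    ∫⁻ t in Ioi 0, ENNReal.ofReal (t ^ n) * ENNReal.ofReal (schwingerIntegrand U F ν d (t • x)) =
      ENNReal.ofReal (Gamma ((∑ i, ν i) - L * d / 2)) *
        ENNReal.ofReal ((∏ i, x i ^ (ν i - 1)) * U x ^ ((∑ i, ν i) - L * d / 2 - d / 2) *
          F x ^ (-((∑ i, ν i) - L * d / 2))) := by
  set ω := (∑ i, ν i) - L * d / 2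
  set c := (∏ i, x i ^ (ν i - 1)) * U x ^ (-(d / 2))
  have hc : 0 ≤ c :=
    mul_nonneg (Finset.prod_nonneg fun i _ => rpow_nonneg (hx i).le _) (rpow_nonneg hUx.le _)
  calc _ = ∫⁻ t in Ioi 0,
        ENNReal.ofReal c * ENNReal.ofReal (t ^ (ω - 1) * exp (-(F x / U x * t))) := by
        refine setLIntegral_congr_fun measurableSet_Ioi fun t (ht : 0 < t) => ?_
        rw [← ENNReal.ofReal_mul (by positivity), schwingerIntegrand_smul ν d ht hx hUx (hU t ht)
          (hF t ht), ENNReal.ofReal_mul hc]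
    _ = ENNReal.ofReal c * ENNReal.ofReal ((1 / (F x / U x)) ^ ω * Gamma ω) := by
        rw [lintegral_const_mul' _ _ ENNReal.ofReal_ne_top,
          lintegral_rpow_mul_exp_neg_mul_Ioi hω (div_pos hFx hUx)]
    _ = _ := by
        rw [← ENNReal.ofReal_mul hc, ← ENNReal.ofReal_mul (Gamma_pos_of_pos hω).le, one_div_div,
          div_rpow hUx.le hFx.le, rpow_neg hFx.le, sub_eq_add_neg ω, rpow_add hUx]
        congr 1
        ring

lemma prod_snoc_one_rpow {n : ℕ} (y : Fin n → ℝ) (a : Fin (n + 1) → ℝ) :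
    ∏ i, (Fin.snoc y 1 : Fin (n + 1) → ℝ) i ^ a i = ∏ i, y i ^ a i.castSucc := by
  simp [Fin.prod_univ_castSucc]

theorem stmt_3_general {n L : ℕ}
    (U F : (Fin (n + 1) → ℝ) → ℝ)
    (hUcont : ContinuousOn U {x : Fin (n + 1) → ℝ | ∀ i, 0 < x i})
    (hFcont : ContinuousOn F {x : Fin (n + 1) → ℝ | ∀ i, 0 < x i})
    (hUpos : ∀ x ∈ {x : Fin (n + 1) → ℝ | ∀ i, 0 < x i}, 0 < U x)
    (hFpos : ∀ x ∈ {x : Fin (n + 1) → ℝ | ∀ i, 0 < x i}, 0 < F x)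
    (hUhom : ∀ t : ℝ, 0 < t → ∀ x ∈ {x : Fin (n + 1) → ℝ | ∀ i, 0 < x i},
      U (t • x) = t ^ L * U x)
    (hFhom : ∀ t : ℝ, 0 < t → ∀ x ∈ {x : Fin (n + 1) → ℝ | ∀ i, 0 < x i},
      F (t • x) = t ^ (L + 1) * F x)
    (ν : Fin (n + 1) → ℝ) (d : ℝ)
    (hω : 0 < (∑ i, ν i) - (L : ℝ) * d / 2) :
    ∫⁻ x in {x : Fin (n + 1) → ℝ | ∀ i, 0 < x i},
        ENNReal.ofReal ((∏ i, x i ^ (ν i - 1)) * U x ^ (-(d / 2)) *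
          Real.exp (-(F x / U x)))
      = ENNReal.ofReal (Real.Gamma ((∑ i, ν i) - (L : ℝ) * d / 2)) *
        ∫⁻ y in {y : Fin n → ℝ | ∀ i, 0 < y i},
          ENNReal.ofReal ((∏ i, y i ^ (ν i.castSucc - 1)) *
            U (Fin.snoc y 1) ^ (((∑ i, ν i) - (L : ℝ) * d / 2) - d / 2) *
            F (Fin.snoc y 1) ^ (-((∑ i, ν i) - (L : ℝ) * d / 2))) := by
  have hG : ContinuousOn (fun x => ENNReal.ofReal (schwingerIntegrand U F ν d x))
      (posOrthant (n + 1)) :=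
    ENNReal.continuous_ofReal.comp_continuousOn
      (continuousOn_schwingerIntegrand hUcont hFcont hUpos ν d)
  refine (lintegral_posOrthant_succ_eq_lintegral_ray hG).trans ?_
  rw [← lintegral_const_mul' _ _ ENNReal.ofReal_ne_top]
  refine setLIntegral_congr_fun (measurableSet_posOrthant n) fun y hy => ?_
  have hx := snoc_mem_posOrthant_iff.2 ⟨hy, one_pos⟩
  rw [lintegral_ray_schwingerIntegrand hω hx (hUpos _ hx) (hFpos _ hx) (fun t ht => hUhom t ht _ hx)
    (fun t ht => hFhom t ht _ hx), prod_snoc_one_rpow]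

/-- Proposition 2.4: equivalence of the Schwinger and Feynman parametric
representations, in the Cheng–Wu chart `x_N = 1` (here `N = n + 1` with `n ≥ 1`),
as an identity in `[0,∞]`. -/
theorem stmt_3 {n L : ℕ} (hn : 1 ≤ n) (hL : 1 ≤ L)
    (U F : (Fin (n + 1) → ℝ) → ℝ)
    (hUcont : ContinuousOn U {x : Fin (n + 1) → ℝ | ∀ i, 0 < x i})
    (hFcont : ContinuousOn F {x : Fin (n + 1) → ℝ | ∀ i, 0 < x i})
    (hUpos : ∀ x ∈ {x : Fin (n + 1) → ℝ | ∀ i, 0 < x i}, 0 < U x)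
    (hFpos : ∀ x ∈ {x : Fin (n + 1) → ℝ | ∀ i, 0 < x i}, 0 < F x)
    (hUhom : ∀ t : ℝ, 0 < t → ∀ x ∈ {x : Fin (n + 1) → ℝ | ∀ i, 0 < x i},
      U (t • x) = t ^ L * U x)
    (hFhom : ∀ t : ℝ, 0 < t → ∀ x ∈ {x : Fin (n + 1) → ℝ | ∀ i, 0 < x i},
      F (t • x) = t ^ (L + 1) * F x)
    (ν : Fin (n + 1) → ℝ) (d : ℝ)
    (hω : 0 < (∑ i, ν i) - (L : ℝ) * d / 2) :
    ∫⁻ x in {x : Fin (n + 1) → ℝ | ∀ i, 0 < x i},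
        ENNReal.ofReal ((∏ i, x i ^ (ν i - 1)) * U x ^ (-(d / 2)) *
          Real.exp (-(F x / U x)))
      = ENNReal.ofReal (Real.Gamma ((∑ i, ν i) - (L : ℝ) * d / 2)) *
        ∫⁻ y in {y : Fin n → ℝ | ∀ i, 0 < y i},
          ENNReal.ofReal ((∏ i, y i ^ (ν i.castSucc - 1)) *
            U (Fin.snoc y 1) ^ (((∑ i, ν i) - (L : ℝ) * d / 2) - d / 2) *
            F (Fin.snoc y 1) ^ (-((∑ i, ν i) - (L : ℝ) * d / 2))) :=
  stmt_3_general U F hUcont hFcont hUpos hFpos hUhom hFhom ν d hω
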